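/- arXiv:math/0609184 — 2 statements merged into one kernel-verified Lean document; each statement's English description precedes it below -/
import Mathlib

section
/- For every m ≥ 0, in the polynomial ring ℤ[t] one has ∑_{w} t^{des(w)} = 1 + ∑_{r=1}^{m} binom(m,r) · ∑_{u ∈ S_r} t^{des(u)+1}, where the left sum is over all permutations w ∈ S_{m+1} such that m+1 appears before the first descent of w, i.e., for every index i with w(i) > w(i+1) one has m+1 ∈ {w(1),…,w(i)}. (Both sides equal the h-polynomial of the stellohedron, the graph-associahedron of the star K_{1,m}.) -/
open Classical Polynomial

/-- Number of descents of a permutation. -/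
def des {n : ℕ} (w : Equiv.Perm (Fin n)) : ℕ :=
  (Finset.univ.filter fun i : Fin n =>
    ∃ j : Fin n, (j : ℕ) = (i : ℕ) + 1 ∧ w j < w i).card

/-- `m+1` (the largest value, `Fin.last m`) appears before the first descent
of `w ∈ S_{m+1}`: for every descent position `i`, the value `m+1` occurs among
`w(1), …, w(i)`. -/
def LastBeforeFirstDescent {m : ℕ} (w : Equiv.Perm (Fin (m + 1))) : Prop :=
  ∀ i j : Fin (m + 1), (i : ℕ) + 1 = (j : ℕ) → w j < w i →
    ∃ k : Fin (m + 1), k ≤ i ∧ w k = Fin.last m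

/-!
A permutation `w ∈ S_{m+1}` in which `m + 1` appears before the first descent, say
`w(p+1) = m + 1`, is increasing up to `w(p+1)`. Hence it is determined by its tail
`g = (w(p+2), …, w(m+1))`, which is an arbitrary injective word of length `r = m - p` in the
letters `1, …, m`: the prefix consists of the remaining letters in increasing order. For `r > 0`
the step from `m + 1` to `w(p+2)` is a descent and the other descents are those of `g`, so
`des w = des g + 1`, while `r = 0` leaves only the identity. An injective word of length `r` is an `r`-subset of
`{1, …, m}` together with its standardization `u ∈ S_r`, which has the same descents; this gives
the factor `C(m, r)`.
-/

namespace Stellohedron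

open Finset Function

section Descents

variable {α β : Type*} [LinearOrder α] [LinearOrder β]

def descents {n : ℕ} (f : Fin n → α) : Finset (Fin n) :=
  univ.filter fun i => ∃ j : Fin n, (j : ℕ) = (i : ℕ) + 1 ∧ f j < f i

theorem mem_descents {n : ℕ} {f : Fin n → α} {i : Fin n} :
    i ∈ descents f ↔ ∃ j : Fin n, (j : ℕ) = (i : ℕ) + 1 ∧ f j < f i := by
  simp [descents]

def desc {n : ℕ} (f : Fin n → α) : ℕ := (descents f).card

theorem des_eq_desc {n : ℕ} (w : Equiv.Perm (Fin n)) : des w = desc w := rfl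

theorem desc_comp_of_strictMono {g : α → β} (hg : StrictMono g) {n : ℕ} (f : Fin n → α) :
    desc (g ∘ f) = desc f := by
  simp only [desc, descents, comp_apply, hg.lt_iff_lt]

theorem des_one (n : ℕ) : des (1 : Equiv.Perm (Fin n)) = 0 := by
  simp only [des, Equiv.Perm.coe_one, id_eq, card_eq_zero, filter_eq_empty_iff, Fin.lt_def]
  omega

def tailPos {m p r : ℕ} (hpr : p + r = m) (j : Fin r) : Fin (m + 1) := ⟨p + 1 + j, by omega⟩

theorem tailPos_injective {m p r : ℕ} (hpr : p + r = m) : Injective (tailPos hpr) :=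
  fun a b h => Fin.ext (by simpa [tailPos] using congrArg Fin.val h)

theorem desc_eq_desc_comp_tailPos_add_one {m p r : ℕ} (hpr : p + r = m) {f : Fin (m + 1) → α}
    (hmono : StrictMonoOn f {i | (i : ℕ) ≤ p}) (hr : 0 < r)
    (hdrop : f (tailPos hpr ⟨0, hr⟩) < f ⟨p, by omega⟩) :
    desc f = desc (f ∘ tailPos hpr) + 1 := by
  have hdescents : descents f =
      insert ⟨p, by omega⟩ ((descents (f ∘ tailPos hpr)).image (tailPos hpr)) := by
    ext i
    simp only [mem_insert, mem_image, mem_descents, comp_apply]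
    constructor
    · rintro ⟨j, hj, hdesc⟩
      rcases lt_trichotomy (i : ℕ) p with hi | hi | hi
      · exact absurd hdesc
          (hmono (by simp; omega) (by simp; omega) (Fin.lt_def.mpr (by omega))).not_gt
      · exact Or.inl (Fin.ext hi)
      · refine Or.inr
          ⟨⟨i - (p + 1), by omega⟩, ⟨⟨i - p, by omega⟩, by simp; omega, ?_⟩,
            Fin.ext (by simp [tailPos]; omega)⟩
        convert hdesc using 2 <;> ext <;> simp [tailPos] <;> omega
    · rintro (rfl | ⟨a, ⟨b, hb, hdesc⟩, rfl⟩)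
      · exact ⟨tailPos hpr ⟨0, hr⟩, by simp [tailPos], hdrop⟩
      · exact ⟨tailPos hpr b, by simp [tailPos]; omega, hdesc⟩
  have hp : (⟨p, by omega⟩ : Fin (m + 1)) ∉ univ.image (tailPos hpr) := by
    simp [tailPos, Fin.ext_iff]
    omega
  rw [desc, desc, hdescents,
    card_insert_of_notMem fun h => hp (image_subset_image (subset_univ _) h),
    card_image_of_injective _ (tailPos_injective hpr)]

end Descents

section Standardization

theorem injective_of_image_univ_eq {β : Type*} [DecidableEq β] {T : Finset β} {r : ℕ}
    (hT : T.card = r) {g : Fin r → β} (himage : univ.image g = T) : Injective g := by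
  rw [← Set.injOn_univ, ← coe_univ]
  exact injOn_of_card_image_eq (by rw [himage, hT, card_univ, Fintype.card_fin])

variable {α : Type*} [LinearOrder α]

theorem exists_perm_orderEmbOfFin_comp_eq {T : Finset α} {r : ℕ} (hT : T.card = r)
    {g : Fin r → α} (hinj : Injective g) (hg : ∀ j, g j ∈ T) :
    ∃ u : Equiv.Perm (Fin r), T.orderEmbOfFin hT ∘ u = g := by
  let k : Fin r → Fin r := fun j => (T.orderIsoOfFin hT).symm ⟨g j, hg j⟩
  have hk : Injective k := fun a b h => hinj (by simpa [k] using h)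
  refine ⟨Equiv.ofBijective k hk.bijective_of_finite, funext fun j => ?_⟩
  simp [k, ← coe_orderIsoOfFin_apply]

variable [Fintype α] {M : Type*} [AddCommMonoid M]

theorem sum_desc_of_image_eq {T : Finset α} {r : ℕ} (hT : T.card = r) (F : ℕ → M) :
    ∑ g ∈ univ.filter (fun g : Fin r → α => univ.image g = T), F (desc g) =
      ∑ u : Equiv.Perm (Fin r), F (des u) := by
  symm
  refine sum_bij (fun u _ => T.orderEmbOfFin hT ∘ u) (fun u _ => ?_)
    (fun u _ v _ huv => Equiv.ext fun j => (T.orderEmbOfFin hT).injective (congrFun huv j))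
    (fun g hg => ?_) (fun u _ => ?_)
  · rw [mem_filter, ← image_image, image_univ_equiv]
    exact ⟨mem_univ _, image_orderEmbOfFin_univ T hT⟩
  · have himage : univ.image g = T := (mem_filter.mp hg).2
    obtain ⟨u, hu⟩ :=
      exists_perm_orderEmbOfFin_comp_eq hT (injective_of_image_univ_eq hT himage)
        fun j => himage ▸ mem_image_of_mem g (mem_univ j)
    exact ⟨u, mem_univ _, hu⟩
  · rw [des_eq_desc, desc_comp_of_strictMono (T.orderEmbOfFin hT).strictMono]

theorem sum_desc_injective (s : Finset α) (r : ℕ) (F : ℕ → M) :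
    ∑ g ∈ univ.filter (fun g : Fin r → α => Injective g ∧ ∀ j, g j ∈ s), F (desc g) =
      s.card.choose r • ∑ u : Equiv.Perm (Fin r), F (des u) := by
  have hmaps : ∀ g ∈ univ.filter (fun g : Fin r → α => Injective g ∧ ∀ j, g j ∈ s),
      univ.image g ∈ powersetCard r s := by
    intro g hg
    obtain ⟨hinj, hs⟩ := (mem_filter.mp hg).2
    rw [mem_powersetCard, card_image_of_injective _ hinj, card_univ, Fintype.card_fin]
    exact ⟨fun a ha => by obtain ⟨j, -, rfl⟩ := mem_image.mp ha; exact hs j, rfl⟩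
  rw [← sum_fiberwise_of_maps_to hmaps, ← card_powersetCard, ← sum_const]
  refine sum_congr rfl fun T hT => ?_
  obtain ⟨hTs, hT⟩ := mem_powersetCard.mp hT
  rw [← sum_desc_of_image_eq hT F, filter_filter]
  refine sum_congr (filter_congr fun g _ =>
    ⟨fun h => h.2, fun himage => ⟨⟨?_, ?_⟩, himage⟩⟩) fun _ _ => rfl
  · exact injective_of_image_univ_eq hT himage
  · exact fun j => hTs (himage ▸ mem_image_of_mem g (mem_univ j))

end Standardization

section Tails

variable {m p r : ℕ}

theorem lastBeforeFirstDescent_iff_strictMonoOn {w : Equiv.Perm (Fin (m + 1))}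
    (hp : (w.symm (Fin.last m) : ℕ) = p) :
    LastBeforeFirstDescent w ↔ StrictMonoOn w {i | (i : ℕ) ≤ p} := by
  have hIic : {i : Fin (m + 1) | (i : ℕ) ≤ p} = Set.Iic (w.symm (Fin.last m)) := by
    ext i; simp [Fin.le_def, hp]
  constructor
  · intro hw
    rw [hIic]
    refine strictMonoOn_Iic_of_lt_succ fun a ha => ?_
    obtain ⟨b, rfl⟩ := Fin.eq_castSucc_of_ne_last (ha.trans_le (Fin.le_last _)).ne
    rw [Fin.orderSucc_castSucc]
    by_contra hnot
    obtain ⟨k, hk, hwk⟩ := hw b.castSucc b.succ (by simp)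
      (lt_of_le_of_ne (not_lt.mp hnot) (w.injective.ne (Fin.castSucc_lt_succ (i := b)).ne'))
    rw [← Equiv.eq_symm_apply] at hwk
    exact (hwk ▸ hk).not_gt ha
  · intro hmono i j hij hdesc
    by_cases hi : (i : ℕ) < p
    · exact absurd hdesc
        (hmono (by simp; omega) (by simp; omega) (Fin.lt_def.mpr (by omega))).not_gt
    · exact ⟨w.symm (Fin.last m), Fin.le_def.mpr (by omega), by simp⟩

def prefixValues (g : Fin r → Fin (m + 1)) : Finset (Fin (m + 1)) :=
  univ \ insert (Fin.last m) (univ.image g)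

theorem card_prefixValues (hpr : p + r = m) {g : Fin r → Fin (m + 1)} (hinj : Injective g)
    (hlast : ∀ j, g j ∈ univ.erase (Fin.last m)) : (prefixValues g).card = p := by
  have hlast' : Fin.last m ∉ univ.image g := by
    simpa using fun j h => (mem_erase.mp (hlast j)).1 h
  rw [prefixValues, card_sdiff_of_subset (subset_univ _), card_insert_of_notMem hlast',
    card_image_of_injective _ hinj]
  simp only [card_univ, Fintype.card_fin]
  omega

def extendTail (hpr : p + r = m) (g : Fin r → Fin (m + 1)) (hP : (prefixValues g).card = p)
    (i : Fin (m + 1)) : Fin (m + 1) :=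
  if h : (i : ℕ) < p then (prefixValues g).orderEmbOfFin hP ⟨i, h⟩
  else if h' : (i : ℕ) = p then Fin.last m
  else g ⟨i - (p + 1), by omega⟩

variable (hpr : p + r = m) {g : Fin r → Fin (m + 1)} (hP : (prefixValues g).card = p)

theorem extendTail_of_lt {i : Fin (m + 1)} (hi : (i : ℕ) < p) :
    extendTail hpr g hP i = (prefixValues g).orderEmbOfFin hP ⟨i, hi⟩ :=
  dif_pos hi

theorem extendTail_of_eq {i : Fin (m + 1)} (hi : (i : ℕ) = p) :
    extendTail hpr g hP i = Fin.last m := by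
  rw [extendTail, dif_neg (by omega), dif_pos hi]

theorem extendTail_tailPos (j : Fin r) : extendTail hpr g hP (tailPos hpr j) = g j := by
  have h1 : ¬ p + 1 + (j : ℕ) < p := by omega
  have h2 : p + 1 + (j : ℕ) ≠ p := by omega
  rw [tailPos, extendTail, dif_neg h1, dif_neg h2]
  congr 1
  ext
  simp

theorem extendTail_surjective : Surjective (extendTail hpr g hP) := by
  intro v
  by_cases hv : v ∈ prefixValues g
  · obtain ⟨k, rfl⟩ : v ∈ Set.range ((prefixValues g).orderEmbOfFin hP) := by
      rwa [range_orderEmbOfFin, mem_coe]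
    exact ⟨⟨k, by omega⟩, extendTail_of_lt hpr hP k.isLt⟩
  · simp only [prefixValues, mem_sdiff, mem_univ, true_and, not_not, mem_insert, mem_image] at hv
    obtain rfl | ⟨j, -, rfl⟩ := hv
    · exact ⟨⟨p, by omega⟩, extendTail_of_eq hpr hP rfl⟩
    · exact ⟨_, extendTail_tailPos hpr hP j⟩

noncomputable def extendTailPerm : Equiv.Perm (Fin (m + 1)) :=
  Equiv.ofBijective _ (extendTail_surjective hpr hP).bijective_of_finite

theorem extendTailPerm_symm_last : ((extendTailPerm hpr hP).symm (Fin.last m) : ℕ) = p := by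
  rw [(Equiv.symm_apply_eq _).mpr (extendTail_of_eq hpr hP (i := ⟨p, by omega⟩) rfl).symm]

theorem extendTail_strictMonoOn : StrictMonoOn (extendTail hpr g hP) {i | (i : ℕ) ≤ p} := by
  intro i _ j (hj : (j : ℕ) ≤ p) hij
  have hi : (i : ℕ) < p := (Fin.lt_def.mp hij).trans_le hj
  rw [extendTail_of_lt hpr hP hi]
  obtain hj | hj := hj.lt_or_eq
  · rw [extendTail_of_lt hpr hP hj]
    exact ((prefixValues g).orderEmbOfFin hP).strictMono hij
  · rw [extendTail_of_eq hpr hP hj, Fin.lt_last_iff_ne_last]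
    have hmem := (prefixValues g).orderEmbOfFin_mem hP ⟨i, hi⟩
    simp only [prefixValues, mem_sdiff, mem_insert, not_or] at hmem
    exact hmem.2.1

theorem extendTailPerm_lastBeforeFirstDescent :
    LastBeforeFirstDescent (extendTailPerm hpr hP) :=
  (lastBeforeFirstDescent_iff_strictMonoOn (extendTailPerm_symm_last hpr hP)).mpr
    (extendTail_strictMonoOn hpr hP)

theorem apply_eq_last_of_symm {w : Equiv.Perm (Fin (m + 1))}
    (hp : (w.symm (Fin.last m) : ℕ) = p) {i : Fin (m + 1)} (hi : (i : ℕ) = p) :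
    w i = Fin.last m := by
  rw [← Equiv.eq_symm_apply]
  exact Fin.ext (hi.trans hp.symm)

theorem apply_tailPos_mem_erase {w : Equiv.Perm (Fin (m + 1))}
    (hp : (w.symm (Fin.last m) : ℕ) = p) (j : Fin r) :
    w (tailPos hpr j) ∈ univ.erase (Fin.last m) := by
  refine mem_erase.mpr ⟨fun h => ?_, mem_univ _⟩
  have := congrArg Fin.val ((Equiv.eq_symm_apply w).mpr h)
  simp only [tailPos] at this
  omega

theorem coe_eq_extendTail {w : Equiv.Perm (Fin (m + 1))} (hw : LastBeforeFirstDescent w)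
    (hp : (w.symm (Fin.last m) : ℕ) = p) (hg : w ∘ tailPos hpr = g) :
    ⇑w = extendTail hpr g hP := by
  have hmono := (lastBeforeFirstDescent_iff_strictMonoOn hp).mp hw
  have hprefix : (fun k : Fin p => w ⟨k, by omega⟩) = (prefixValues g).orderEmbOfFin hP := by
    refine orderEmbOfFin_unique hP (fun k => ?_)
      fun a b hab => hmono a.isLt.le b.isLt.le (Fin.lt_def.mpr hab)
    simp only [prefixValues, mem_sdiff, mem_univ, mem_insert, mem_image, true_and, not_or,
      not_exists, ← hg, comp_apply]
    refine ⟨fun h => ?_, fun j h => ?_⟩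
    · have := congrArg Fin.val ((Equiv.eq_symm_apply w).mpr h)
      simp only at this
      omega
    · have := congrArg Fin.val (w.injective h)
      simp only [tailPos] at this
      omega
  funext i
  rcases lt_trichotomy (i : ℕ) p with hi | hi | hi
  · rw [extendTail_of_lt hpr hP hi, ← hprefix]
  · rw [extendTail_of_eq hpr hP hi, apply_eq_last_of_symm hp hi]
  · have hi : tailPos hpr ⟨i - (p + 1), by omega⟩ = i := Fin.ext (by simp [tailPos]; omega)
    rw [← hi, extendTail_tailPos]
    exact congrFun hg _

end Tails

section Fibers

variable {m p r : ℕ}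

noncomputable def lastBeforeFirstDescentAt (m p : ℕ) : Finset (Equiv.Perm (Fin (m + 1))) :=
  univ.filter fun w => LastBeforeFirstDescent w ∧ (w.symm (Fin.last m) : ℕ) = p

theorem sum_lastBeforeFirstDescentAt_eq_sum_injective {M : Type*} [AddCommMonoid M]
    (hpr : p + r = m) (hr : 0 < r) (F : ℕ → M) :
    ∑ w ∈ lastBeforeFirstDescentAt m p, F (des w) =
      ∑ g ∈ univ.filter (fun g : Fin r → Fin (m + 1) =>
        Injective g ∧ ∀ j, g j ∈ univ.erase (Fin.last m)), F (desc g + 1) := by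
  have htail : ∀ w ∈ lastBeforeFirstDescentAt m p,
      Injective (w ∘ tailPos hpr) ∧ ∀ j, (w ∘ tailPos hpr) j ∈ univ.erase (Fin.last m) :=
    fun w hw => ⟨w.injective.comp (tailPos_injective hpr),
      apply_tailPos_mem_erase hpr (mem_filter.mp hw).2.2⟩
  refine sum_bij (fun w _ => w ∘ tailPos hpr)
    (fun w hw => mem_filter.mpr ⟨mem_univ _, htail w hw⟩)
    (fun w₁ hw₁ w₂ hw₂ h => ?_) (fun g hg => ?_) (fun w hw => ?_)
  · have hP := card_prefixValues hpr (htail w₁ hw₁).1 (htail w₁ hw₁).2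
    obtain ⟨hw₁, hp₁⟩ := (mem_filter.mp hw₁).2
    obtain ⟨hw₂, hp₂⟩ := (mem_filter.mp hw₂).2
    exact DFunLike.coe_injective ((coe_eq_extendTail hpr hP hw₁ hp₁ rfl).trans
      (coe_eq_extendTail hpr hP hw₂ hp₂ h.symm).symm)
  · obtain ⟨hinj, hlast⟩ := (mem_filter.mp hg).2
    have hP := card_prefixValues hpr hinj hlast
    exact ⟨extendTailPerm hpr hP, mem_filter.mpr ⟨mem_univ _,
      extendTailPerm_lastBeforeFirstDescent hpr hP, extendTailPerm_symm_last hpr hP⟩,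
      funext (extendTail_tailPos hpr hP)⟩
  · obtain ⟨hw, hp⟩ := (mem_filter.mp hw).2
    have hdrop : w (tailPos hpr ⟨0, hr⟩) < w ⟨p, by omega⟩ := by
      rw [apply_eq_last_of_symm hp (i := ⟨p, by omega⟩) rfl, Fin.lt_last_iff_ne_last]
      exact (mem_erase.mp (apply_tailPos_mem_erase hpr hp _)).1
    rw [des_eq_desc, desc_eq_desc_comp_tailPos_add_one hpr
      ((lastBeforeFirstDescent_iff_strictMonoOn hp).mp hw) hr hdrop]

theorem sum_lastBeforeFirstDescentAt (hpr : p + r = m) (hr : 0 < r) :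
    ∑ w ∈ lastBeforeFirstDescentAt m p, (X : ℤ[X]) ^ des w =
      C (m.choose r : ℤ) * ∑ u : Equiv.Perm (Fin r), (X : ℤ[X]) ^ (des u + 1) := by
  rw [sum_lastBeforeFirstDescentAt_eq_sum_injective hpr hr,
    sum_desc_injective _ r fun k => (X : ℤ[X]) ^ (k + 1), card_erase_of_mem (mem_univ _),
    card_univ, Fintype.card_fin, Nat.add_sub_cancel, nsmul_eq_mul, C_eq_natCast]

theorem lastBeforeFirstDescentAt_self : lastBeforeFirstDescentAt m m = {1} := by
  ext w
  simp only [lastBeforeFirstDescentAt, mem_filter, mem_univ, true_and, mem_singleton]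
  constructor
  · rintro ⟨hw, hp⟩
    have hmono : StrictMono w := fun i j hij =>
      (lastBeforeFirstDescent_iff_strictMonoOn hp).mp hw (Fin.is_le i) (Fin.is_le j) hij
    exact Equiv.ext (congrFun ((hmono.range_inj strictMono_id).mp
      (w.surjective.range_eq.trans Set.range_id.symm)))
  · rintro rfl
    have hp : ((1 : Equiv.Perm (Fin (m + 1))).symm (Fin.last m) : ℕ) = m := rfl
    exact ⟨(lastBeforeFirstDescent_iff_strictMonoOn hp).mpr fun _ _ _ _ h => h, hp⟩

end Fibers

end Stellohedron

open Stellohedron Finset in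
/-- The `h`-polynomial of the stellohedron: the descent generating function
of permutations of `S_{m+1}` in which `m+1` appears before the first descent
equals `1 + ∑_{r=1}^m C(m,r) ∑_{u ∈ S_r} t^{des(u)+1}`. -/
theorem stellohedron_h_polynomial (m : ℕ) :
    ∑ w ∈ Finset.univ.filter
        (fun w : Equiv.Perm (Fin (m + 1)) => LastBeforeFirstDescent w),
        (X : Polynomial ℤ) ^ des w
      = 1 + ∑ r ∈ Finset.Icc 1 m, C ((m.choose r : ℤ)) *
          ∑ u : Equiv.Perm (Fin r), (X : Polynomial ℤ) ^ (des u + 1) := by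
  have hmaps : ∀ w ∈ univ.filter (fun w : Equiv.Perm (Fin (m + 1)) => LastBeforeFirstDescent w),
      m - (w.symm (Fin.last m) : ℕ) ∈ range (m + 1) := fun w _ => mem_range.mpr (by omega)
  have hfiber : ∀ r ≤ m, (univ.filter fun w : Equiv.Perm (Fin (m + 1)) =>
      LastBeforeFirstDescent w).filter (fun w => m - (w.symm (Fin.last m) : ℕ) = r) =
      lastBeforeFirstDescentAt m (m - r) := fun r hr => by
    rw [filter_filter, lastBeforeFirstDescentAt]
    exact filter_congr fun w _ => and_congr_right fun _ => by
      have := (w.symm (Fin.last m)).isLt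
      omega
  rw [← sum_fiberwise_of_maps_to hmaps, range_eq_Ico, sum_eq_sum_Ico_succ_bot m.succ_pos,
    hfiber 0 m.zero_le, Nat.sub_zero, lastBeforeFirstDescentAt_self, sum_singleton, des_one,
    pow_zero]
  congr 1
  refine sum_congr (by ext; simp) fun r hr => ?_
  obtain ⟨hr₁, hr₂⟩ := mem_Icc.mp hr
  rw [hfiber r hr₂]
  exact sum_lastBeforeFirstDescentAt (Nat.sub_add_cancel hr₂) hr₁
end

section
/- Let n ≥ 1 and let B(Path_n) be the graphical building set of the path 1—2—⋯—n, i.e., B(Path_n) consists of all intervals {i, i+1, …, j} for 1 ≤ i ≤ j ≤ n. Then a permutation w ∈ S_n belongs to S_n(B(Path_n)) if and only if w is 312-avoiding, i.e., there is no triple of indices i < j < k with w(j) < w(k) < w(i). -/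
/-- The prefix set `{w(1), …, w(i)}`. -/
def prefixSet {n : ℕ} (w : Equiv.Perm (Fin n)) (i : Fin n) : Finset (Fin n) :=
  (Finset.univ.filter fun j => j ≤ i).image w

/-- The graphical building set of the path `1 — 2 — ⋯ — n`: all intervals
`{i, i+1, …, j}` for `i ≤ j`. -/
def pathBuilding (n : ℕ) : Set (Finset (Fin n)) :=
  {I | ∃ i j : Fin n, i ≤ j ∧ I = Finset.Icc i j}

/-- `w` is a `B`-permutation (for a collection `B` of subsets of `[n]`). -/
def IsBPermSet {n : ℕ} (B : Set (Finset (Fin n))) (w : Equiv.Perm (Fin n)) : Prop :=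
  ∀ i : Fin n, ∃ I ∈ B, I ⊆ prefixSet w i ∧ w i ∈ I ∧
    ∃ m ∈ I, ∀ x ∈ prefixSet w i, x ≤ m

lemma mem_prefixSet {n : ℕ} (w : Equiv.Perm (Fin n)) (i v : Fin n) :
    v ∈ prefixSet w i ↔ ∃ j : Fin n, j ≤ i ∧ w j = v := by
  simp [prefixSet, Finset.mem_image, Finset.mem_filter, and_comm]

/-- A permutation is a `B(Path_n)`-permutation if and only if it is
`312`-avoiding: there is no triple `i < j < k` with `w(j) < w(k) < w(i)`. -/
theorem pathBuilding_bperm_iff_312_avoiding (n : ℕ) (hn : 1 ≤ n)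
    (w : Equiv.Perm (Fin n)) :
    IsBPermSet (pathBuilding n) w ↔
      ∀ i j k : Fin n, i < j → j < k → ¬ (w j < w k ∧ w k < w i) := by
  constructor
  · intro h i j k hij hjk ⟨h1, h2⟩
    obtain ⟨I, ⟨a, b, hab, rfl⟩, hsub, hwI, m, hm, hmax⟩ := h j
    have hwi : w i ∈ prefixSet w j := (mem_prefixSet w j (w i)).2 ⟨i, le_of_lt hij, rfl⟩
    have haj : a ≤ w j := (Finset.mem_Icc.1 hwI).1
    have hmb : m ≤ b := (Finset.mem_Icc.1 hm).2
    have hwib : w i ≤ b := le_trans (hmax _ hwi) hmb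
    have hwk : w k ∈ Finset.Icc a b :=
      Finset.mem_Icc.2 ⟨le_trans haj (le_of_lt h1), le_trans (le_of_lt h2) hwib⟩
    obtain ⟨l, hl, hlw⟩ := (mem_prefixSet w j (w k)).1 (hsub hwk)
    have : l = k := w.injective hlw
    subst this
    exact absurd hl (not_le_of_gt hjk)
  · intro avoid i
    have hne : (prefixSet w i).Nonempty :=
      ⟨w i, (mem_prefixSet w i (w i)).2 ⟨i, le_rfl, rfl⟩⟩
    set M := (prefixSet w i).max' hne with hM
    have hMmem : M ∈ prefixSet w i := Finset.max'_mem _ hne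
    have hwiM : w i ≤ M := Finset.le_max' _ _ ((mem_prefixSet w i (w i)).2 ⟨i, le_rfl, rfl⟩)
    refine ⟨Finset.Icc (w i) M, ⟨w i, M, hwiM, rfl⟩, ?_, Finset.mem_Icc.2 ⟨le_rfl, hwiM⟩,
      M, Finset.mem_Icc.2 ⟨hwiM, le_rfl⟩, fun x hx => Finset.le_max' _ _ hx⟩
    intro v hv
    obtain ⟨hv1, hv2⟩ := Finset.mem_Icc.1 hv
    by_contra hvn
    -- v = w k for some k > i
    set k := w.symm v with hk
    have hwk : w k = v := w.apply_symm_apply v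
    have hik : i < k := by
      by_contra hle
      exact hvn ((mem_prefixSet w i v).2 ⟨k, le_of_not_gt hle, hwk⟩)
    obtain ⟨a, ha, haw⟩ := (mem_prefixSet w i M).1 hMmem
    have hv1' : w i < v := lt_of_le_of_ne hv1 (by
      rintro rfl
      exact hvn ((mem_prefixSet w i (w i)).2 ⟨i, le_rfl, rfl⟩))
    have hv2' : v < M := lt_of_le_of_ne hv2 (by
      rintro rfl
      exact hvn hMmem)
    have hai : a < i := lt_of_le_of_ne ha (by
      rintro rfl
      rw [← haw] at hv2'
      exact absurd hv2' (not_lt_of_gt hv1'))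
    exact avoid a i k hai hik ⟨hwk ▸ hv1', hwk ▸ (haw ▸ hv2')⟩
end
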